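/- Let ω be a random vector in ℝ^d with Gaussian mixture law Σ_{j∈J} π_j N(μ_j, Σ_j), and let ε ∈ (0,1). If there exist y_j ≥ 1/2 with Σ_j π_j y_j ≥ 1 − ε and, for each j, Φ^{-1}(y_j)·√(aᵀΣ_j a) + μ_jᵀa ≤ b, then P(aᵀω ≤ b) ≥ 1 − ε. -/
import Mathlib

open MeasureTheory ProbabilityTheory

/-- The standard normal cumulative distribution function. -/
noncomputable def stdNormalCDF (s : ℝ) : ℝ :=
  ((gaussianReal 0 1) (Set.Iic s)).toReal

lemma gaussianReal_eq_map (mean : ℝ) (v : NNReal) (hv : v ≠ 0) :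
    gaussianReal mean v
      = (gaussianReal 0 1).map (fun x => Real.sqrt v * x + mean) := by
  have h1 : (gaussianReal 0 1).map (fun x => Real.sqrt v * x)
      = gaussianReal 0 v := by
    rw [show (fun x => Real.sqrt (v:ℝ) * x) = (fun x => Real.sqrt (v:ℝ) * x) from rfl]
    rw [gaussianReal_map_const_mul (Real.sqrt v)]
    congr 1
    · ring
    · ext
      simp [Real.sq_sqrt v.coe_nonneg]
  have h2 : (fun x => Real.sqrt v * x + mean)
      = (fun x => x + mean) ∘ (fun x => Real.sqrt v * x) := rfl
  rw [h2, ← Measure.map_map (by fun_prop) (by fun_prop), h1,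
    gaussianReal_map_add_const, zero_add]

lemma key_lemma (mean : ℝ) (v : NNReal) (b c yj : ℝ)
    (hc : stdNormalCDF c = yj) (hy1 : yj ≤ 1)
    (h : c * Real.sqrt v + mean ≤ b) :
    yj ≤ ((gaussianReal mean v) (Set.Iic b)).toReal := by
  by_cases hv : v = 0
  · subst hv
    simp only [NNReal.coe_zero, Real.sqrt_zero, mul_zero, zero_add] at h
    rw [gaussianReal_zero_var, Measure.dirac_apply' _ measurableSet_Iic]
    simp [Set.indicator_of_mem (Set.mem_Iic.mpr h), hy1]
  · have hvpos : (0:ℝ) < v := lt_of_le_of_ne v.coe_nonneg (by exact_mod_cast (Ne.symm hv))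
    have hs : (0:ℝ) < Real.sqrt v := Real.sqrt_pos.mpr hvpos
    rw [gaussianReal_eq_map mean v hv,
      Measure.map_apply (by fun_prop) measurableSet_Iic]
    have hset : (fun x => Real.sqrt v * x + mean) ⁻¹' Set.Iic b
        = Set.Iic ((b - mean) / Real.sqrt v) := by
      ext x
      simp only [Set.mem_preimage, Set.mem_Iic]
      rw [le_div_iff₀ hs]
      constructor <;> intro hx <;> linarith [mul_comm x (Real.sqrt (v:ℝ))]
    rw [hset, ← hc]
    have hcle : c ≤ (b - mean) / Real.sqrt v := by
      rw [le_div_iff₀ hs]; linarith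
    unfold stdNormalCDF
    exact ENNReal.toReal_mono (measure_ne_top _ _)
      (measure_mono (Set.Iic_subset_Iic.mpr hcle))

/-- A measure `P` on `ℝ^d` is Gaussian with mean vector `m` and covariance
matrix `S` iff every linear functional `x ↦ aᵀx` pushes `P` forward to the
one-dimensional Gaussian with mean `aᵀm` and variance `aᵀSa` (Cramér–Wold). -/
def IsGaussianVec {d : ℕ} (P : Measure (Fin d → ℝ)) (m : Fin d → ℝ)
    (S : Matrix (Fin d) (Fin d) ℝ) : Prop :=
  IsProbabilityMeasure P ∧
  ∀ a : Fin d → ℝ,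
    P.map (fun x => ∑ i, a i * x i)
      = gaussianReal (∑ i, a i * m i) (Real.toNNReal (∑ i, ∑ k, a i * S i k * a k))

/-- If `ω` has Gaussian mixture law `Σ_j π_j N(μ_j, Σ_j)`, and there exist
`y_j ≥ 1/2` with `Σ_j π_j y_j ≥ 1 − ε` and
`Φ⁻¹(y_j)·√(aᵀΣ_j a) + μ_jᵀa ≤ b` for each `j`, then `P(aᵀω ≤ b) ≥ 1 − ε`. -/
theorem gaussianMixture_chance_constraint_sufficient {d : ℕ} {ι : Type*}
    (J : Finset ι) (π : ι → NNReal) (hπ : ∑ j ∈ J, π j = 1)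
    (comp : ι → Measure (Fin d → ℝ)) (m : ι → Fin d → ℝ)
    (S : ι → Matrix (Fin d) (Fin d) ℝ)
    (hG : ∀ j ∈ J, IsGaussianVec (comp j) (m j) (S j))
    (P : Measure (Fin d → ℝ))
    (hP : P = ∑ j ∈ J, ((π j : ENNReal) • comp j))
    (a : Fin d → ℝ) (b : ℝ) (ε : ℝ) (hε : ε ∈ Set.Ioo (0 : ℝ) 1)
    (Φinv : ℝ → ℝ) (hΦinv : ∀ y ∈ Set.Ioo (0 : ℝ) 1, stdNormalCDF (Φinv y) = y)
    (y : ι → ℝ) (hy : ∀ j ∈ J, (1 : ℝ) / 2 ≤ y j) (hy1 : ∀ j ∈ J, y j < 1)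
    (hsum : 1 - ε ≤ ∑ j ∈ J, (π j : ℝ) * y j)
    (hcons : ∀ j ∈ J,
      Φinv (y j) * Real.sqrt (∑ i, ∑ k, a i * S j i k * a k)
        + ∑ i, (m j) i * a i ≤ b) :
    1 - ε ≤ (P {ω | ∑ i, a i * ω i ≤ b}).toReal := by
  set f : (Fin d → ℝ) → ℝ := fun x => ∑ i, a i * x i with hf
  have hfm : Measurable f := by fun_prop
  have hset : MeasurableSet {ω : Fin d → ℝ | ∑ i, a i * ω i ≤ b} :=
    hfm measurableSet_Iic
  -- per-component bound
  have hcomp : ∀ j ∈ J, y j ≤ ((comp j) {ω | ∑ i, a i * ω i ≤ b}).toReal := by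
    intro j hj
    obtain ⟨hprob, hmap⟩ := hG j hj
    have : (comp j) {ω | ∑ i, a i * ω i ≤ b}
        = ((comp j).map f) (Set.Iic b) := by
      rw [Measure.map_apply hfm measurableSet_Iic]
      rfl
    rw [this, hmap a]
    have hyo : y j ∈ Set.Ioo (0:ℝ) 1 :=
      ⟨lt_of_lt_of_le (by norm_num) (hy j hj), hy1 j hj⟩
    refine key_lemma _ _ _ (Φinv (y j)) (y j) (hΦinv _ hyo) (le_of_lt (hy1 j hj)) ?_
    have hsq : Real.sqrt ((Real.toNNReal (∑ i, ∑ k, a i * S j i k * a k) : ℝ))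
        = Real.sqrt (∑ i, ∑ k, a i * S j i k * a k) := by
      rw [Real.coe_toNNReal']
      rcases le_total (∑ i, ∑ k, a i * S j i k * a k) 0 with h | h
      · rw [max_eq_right h, Real.sqrt_zero,
          eq_comm, Real.sqrt_eq_zero']
        exact h
      · rw [max_eq_left h]
    rw [hsq]
    have := hcons j hj
    have hm : ∑ i, a i * m j i = ∑ i, m j i * a i := by
      exact Finset.sum_congr rfl fun i _ => mul_comm _ _
    linarith
  -- sum decomposition
  have hPapp : P {ω | ∑ i, a i * ω i ≤ b}
      = ∑ j ∈ J, (π j : ENNReal) * (comp j) {ω | ∑ i, a i * ω i ≤ b} := by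
    rw [hP]
    simp [Measure.finset_sum_apply, Measure.smul_apply, smul_eq_mul]
  have hfin : ∀ j ∈ J, (π j : ENNReal) * (comp j) {ω | ∑ i, a i * ω i ≤ b} ≠ ⊤ := by
    intro j hj
    have : IsProbabilityMeasure (comp j) := (hG j hj).1
    exact ENNReal.mul_ne_top ENNReal.coe_ne_top (measure_ne_top _ _)
  rw [hPapp, ENNReal.toReal_sum hfin]
  refine le_trans hsum (Finset.sum_le_sum fun j hj => ?_)
  rw [ENNReal.toReal_mul]
  simp only [ENNReal.coe_toReal]
  exact mul_le_mul_of_nonneg_left (hcomp j hj) (π j).coe_nonneg
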